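/- arXiv:2510.06792 — 6 statements merged into one kernel-verified Lean document; each statement's English description precedes it below -/
import Mathlib

section
/- Let b, c ∈ ℂ, let m ≥ 0 be an integer, and let f = f_{b,c} : ℂ × ℂ × ℂ^m → ℂ, f(x,y,z) = x³ + b x² y³ + y⁹ + c x y⁷ + z₁² + ⋯ + z_m². Fix δ > 1 and σ > 0 and set Ω = Ω(f, δ, σ, 9). Then the tangent cone of Ω at the origin is contained in the y-axis: every vector v = (v_x, v_y, v_z) ∈ ℂ × ℂ × ℂ^m in the tangent cone of Ω at 0 satisfies v_x = 0 and v_z = 0. -/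
open Filter

/-- The germ `f_{b,c}(x,y,z) = x³ + b x² y³ + y⁹ + c x y⁷ + z₁² + ⋯ + z_m²`,
where `x = p 0`, `y = p 1` and `z i = p (i+2)`. -/
noncomputable def fJ (b c : ℂ) (m : ℕ) (p : EuclideanSpace ℂ (Fin (m + 2))) : ℂ :=
  (p 0) ^ 3 + b * (p 0) ^ 2 * (p 1) ^ 3 + (p 1) ^ 9 + c * (p 0) * (p 1) ^ 7 +
    ∑ i : Fin m, (p i.succ.succ) ^ 2

/-- The gradient `∇f_{b,c}(x,y,z) =
(3x² + 2bxy³ + cy⁷, 3bx²y² + 9y⁸ + 7cxy⁶, 2z₁, …, 2z_m)`. -/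
noncomputable def gradJ (b c : ℂ) (m : ℕ) (p : EuclideanSpace ℂ (Fin (m + 2))) :
    EuclideanSpace ℂ (Fin (m + 2)) := WithLp.toLp 2 fun i =>
  if (i : ℕ) = 0 then 3 * (p 0) ^ 2 + 2 * b * (p 0) * (p 1) ^ 3 + c * (p 1) ^ 7
  else if (i : ℕ) = 1 then
    3 * b * (p 0) ^ 2 * (p 1) ^ 2 + 9 * (p 1) ^ 8 + 7 * c * (p 0) * (p 1) ^ 6
  else 2 * p i

/-- The set `Ω(f_{b,c}, δ, σ, 9) = V^δ(f_{b,c}) ∩ W^σ(f_{b,c}, 9)`. -/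
noncomputable def OmegaJ (b c : ℂ) (m : ℕ) (δ σ : ℝ) :
    Set (EuclideanSpace ℂ (Fin (m + 2))) :=
  {p | fJ b c m p ≠ 0 ∧
    δ⁻¹ * ‖p‖ * ‖gradJ b c m p‖ ≤ ‖fJ b c m p‖ ∧
    ‖fJ b c m p‖ ≤ δ * ‖p‖ * ‖gradJ b c m p‖ ∧
    ‖fJ b c m p‖ ≤ σ * ‖p‖ ^ (9 : ℕ)}

lemma coord_le_norm {n : ℕ} (w : EuclideanSpace ℂ (Fin n)) (i : Fin n) : ‖w i‖ ≤ ‖w‖ := by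
  rw [EuclideanSpace.norm_eq]
  have h : ‖w i‖ ^ 2 ≤ ∑ j, ‖w j‖ ^ 2 :=
    Finset.single_le_sum (fun j _ => sq_nonneg ‖w j‖) (Finset.mem_univ i)
  calc ‖w i‖ = Real.sqrt (‖w i‖ ^ 2) := (Real.sqrt_sq (norm_nonneg _)).symm
    _ ≤ _ := Real.sqrt_le_sqrt h

/-- The tangent cone at `0` of `Ω(f_{b,c}, δ, σ, 9)` is contained in the `y`-axis:
any `v` in the tangent cone (there exist `p k ∈ Ω` with `p k → 0` and positive
reals `r k` with `r k • p k → v`) has vanishing `x`-component and `z`-components. -/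
theorem tangent_cone_of_Omega_in_y_axis (b c : ℂ) (m : ℕ) (δ σ : ℝ)
    (hδ : 1 < δ) (hσ : 0 < σ) (v : EuclideanSpace ℂ (Fin (m + 2)))
    (hv : ∃ (p : ℕ → EuclideanSpace ℂ (Fin (m + 2))) (r : ℕ → ℝ),
      (∀ k, p k ∈ OmegaJ b c m δ σ) ∧
      Tendsto p atTop (nhds 0) ∧
      (∀ k, 0 < r k) ∧
      Tendsto (fun k => r k • p k) atTop (nhds v)) :
    v 0 = 0 ∧ ∀ i : Fin m, v i.succ.succ = 0 := by
  obtain ⟨p, r, hΩ, hp0, hr, hrv⟩ := hv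
  have hδ0 : (0 : ℝ) < δ := lt_trans one_pos hδ
  -- p k ≠ 0 and norm positivity
  have hpne : ∀ k, ‖p k‖ > 0 := by
    intro k
    rcases hΩ k with ⟨hf, -, -, -⟩
    have : p k ≠ 0 := by
      intro h; apply hf; rw [h]; simp [fJ]
    simpa [norm_pos_iff] using this
  -- gradient bound
  have hgrad : ∀ k, ‖gradJ b c m (p k)‖ ≤ δ * σ * ‖p k‖ ^ 8 := by
    intro k
    rcases hΩ k with ⟨-, h1, -, h3⟩
    have hp := hpne k
    have h4 : δ⁻¹ * ‖p k‖ * ‖gradJ b c m (p k)‖ ≤ σ * ‖p k‖ ^ 9 := le_trans h1 h3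
    set G := ‖gradJ b c m (p k)‖ with hG
    have h5 : ‖p k‖ * G ≤ δ * σ * ‖p k‖ ^ 9 := by
      have hh := mul_le_mul_of_nonneg_left h4 hδ0.le
      calc ‖p k‖ * G = δ * (δ⁻¹ * ‖p k‖ * G) := by
            rw [← mul_assoc, ← mul_assoc, mul_inv_cancel₀ (ne_of_gt hδ0), one_mul]
        _ ≤ δ * (σ * ‖p k‖ ^ 9) := hh
        _ = δ * σ * ‖p k‖ ^ 9 := by ring
    have h6 : ‖p k‖ * G ≤ ‖p k‖ * (δ * σ * ‖p k‖ ^ 8) := by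
      calc ‖p k‖ * G ≤ δ * σ * ‖p k‖ ^ 9 := h5
        _ = ‖p k‖ * (δ * σ * ‖p k‖ ^ 8) := by ring
    exact le_of_mul_le_mul_left h6 hp
  -- limit facts
  have hnp : Tendsto (fun k => ‖p k‖) atTop (nhds 0) := by simpa using hp0.norm
  have hrp : Tendsto (fun k => r k * ‖p k‖) atTop (nhds ‖v‖) := by
    have := hrv.norm
    simpa [norm_smul, abs_of_pos, fun k => abs_of_pos (hr k)] using this
  have hcoord : ∀ i : Fin (m+2),
      Tendsto (fun k => r k * ‖p k i‖) atTop (nhds ‖v i‖) := by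
    intro i
    have h := ((EuclideanSpace.proj (𝕜 := ℂ) i).continuous.tendsto v).comp hrv
    have h2 : Tendsto (fun k => r k • (p k i)) atTop (nhds (v i)) := h
    have := h2.norm
    simpa [norm_smul, fun k => abs_of_pos (hr k)] using this
  constructor
  · -- x component
    have key : ∀ k, 3 * (r k * ‖p k 0‖) ^ 2 ≤
        δ * σ * (r k * ‖p k‖) ^ 2 * ‖p k‖ ^ 6
        + 2 * ‖b‖ * (r k * ‖p k 0‖) * ((r k * ‖p k‖) * ‖p k‖ ^ 2)
        + ‖c‖ * (r k * ‖p k‖) ^ 2 * ‖p k‖ ^ 5 := by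
      intro k
      have hg0 : ‖3 * (p k 0) ^ 2 + 2 * b * (p k 0) * (p k 1) ^ 3 + c * (p k 1) ^ 7‖
          ≤ δ * σ * ‖p k‖ ^ 8 := by
        have h := coord_le_norm (gradJ b c m (p k)) 0
        have he : gradJ b c m (p k) 0
            = 3 * (p k 0) ^ 2 + 2 * b * (p k 0) * (p k 1) ^ 3 + c * (p k 1) ^ 7 := by
          simp [gradJ]
        rw [he] at h
        exact le_trans h (hgrad k)
      set x := p k 0 with hx
      set y := p k 1 with hy
      have hxle : ‖x‖ ≤ ‖p k‖ := coord_le_norm _ _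
      have hyle : ‖y‖ ≤ ‖p k‖ := coord_le_norm _ _
      have h3x : 3 * ‖x‖ ^ 2 ≤ δ * σ * ‖p k‖ ^ 8 + 2 * ‖b‖ * ‖x‖ * ‖p k‖ ^ 3
          + ‖c‖ * ‖p k‖ ^ 7 := by
        have e1 : ‖3 * x ^ 2‖ = 3 * ‖x‖ ^ 2 := by
          rw [norm_mul, norm_pow]; norm_num
        have e2 : ‖2 * b * x * y ^ 3‖ = 2 * ‖b‖ * ‖x‖ * ‖y‖ ^ 3 := by
          rw [norm_mul, norm_mul, norm_mul, norm_pow]; norm_num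
        have e3 : ‖c * y ^ 7‖ = ‖c‖ * ‖y‖ ^ 7 := by rw [norm_mul, norm_pow]
        have tri : ‖3 * x ^ 2‖ ≤ ‖3 * x ^ 2 + 2 * b * x * y ^ 3 + c * y ^ 7‖
            + ‖2 * b * x * y ^ 3‖ + ‖c * y ^ 7‖ := by
          have := norm_sub_le (3 * x ^ 2 + 2 * b * x * y ^ 3 + c * y ^ 7)
            (2 * b * x * y ^ 3 + c * y ^ 7)
          calc ‖3 * x ^ 2‖
              = ‖(3 * x ^ 2 + 2 * b * x * y ^ 3 + c * y ^ 7) - (2 * b * x * y ^ 3 + c * y ^ 7)‖ := by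
                ring_nf
            _ ≤ ‖3 * x ^ 2 + 2 * b * x * y ^ 3 + c * y ^ 7‖ + ‖2 * b * x * y ^ 3 + c * y ^ 7‖ :=
                norm_sub_le _ _
            _ ≤ _ := by
                have := norm_add_le (2 * b * x * y ^ 3) (c * y ^ 7); linarith
        have hb1 : 2 * ‖b‖ * ‖x‖ * ‖y‖ ^ 3 ≤ 2 * ‖b‖ * ‖x‖ * ‖p k‖ ^ 3 := by
          gcongr
        have hb2 : ‖c‖ * ‖y‖ ^ 7 ≤ ‖c‖ * ‖p k‖ ^ 7 := by gcongr
        rw [e1, e2, e3] at tri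
        linarith [hg0]
      have hrk := (hr k).le
      nlinarith [mul_le_mul_of_nonneg_left h3x (sq_nonneg (r k)), sq_nonneg (r k)]
    -- limits
    have hL : Tendsto (fun k => 3 * (r k * ‖p k 0‖) ^ 2) atTop (nhds (3 * ‖v 0‖ ^ 2)) :=
      ((hcoord 0).pow 2).const_mul 3
    have hR : Tendsto (fun k =>
        δ * σ * (r k * ‖p k‖) ^ 2 * ‖p k‖ ^ 6
        + 2 * ‖b‖ * (r k * ‖p k 0‖) * ((r k * ‖p k‖) * ‖p k‖ ^ 2)
        + ‖c‖ * (r k * ‖p k‖) ^ 2 * ‖p k‖ ^ 5) atTop (nhds 0) := by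
      have h1 := (((hrp.pow 2).const_mul (δ * σ)).mul (hnp.pow 6))
      have h2 := ((hcoord 0).const_mul (2 * ‖b‖)).mul (hrp.mul (hnp.pow 2))
      have h3 := ((hrp.pow 2).const_mul ‖c‖).mul (hnp.pow 5)
      have := (h1.add h2).add h3
      simpa using this
    have hle : 3 * ‖v 0‖ ^ 2 ≤ 0 := le_of_tendsto_of_tendsto' hL hR key
    have : ‖v 0‖ = 0 := by nlinarith [norm_nonneg (v 0)]
    exact norm_eq_zero.mp this
  · intro i
    have key : ∀ k, 2 * (r k * ‖p k i.succ.succ‖) ≤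
        δ * σ * (r k * ‖p k‖) * ‖p k‖ ^ 7 := by
      intro k
      have h := coord_le_norm (gradJ b c m (p k)) i.succ.succ
      have he : gradJ b c m (p k) i.succ.succ = 2 * p k i.succ.succ := by
        simp [gradJ, Fin.val_succ]
      rw [he] at h
      have h2 : 2 * ‖p k i.succ.succ‖ ≤ δ * σ * ‖p k‖ ^ 8 := by
        have : ‖(2 : ℂ) * p k i.succ.succ‖ = 2 * ‖p k i.succ.succ‖ := by
          rw [norm_mul]; norm_num
        rw [this] at h
        exact le_trans h (hgrad k)
      have hrk := (hr k).le
      nlinarith [mul_le_mul_of_nonneg_left h2 hrk]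
    have hL : Tendsto (fun k => 2 * (r k * ‖p k i.succ.succ‖)) atTop
        (nhds (2 * ‖v i.succ.succ‖)) := (hcoord i.succ.succ).const_mul 2
    have hR : Tendsto (fun k => δ * σ * (r k * ‖p k‖) * ‖p k‖ ^ 7) atTop (nhds 0) := by
      have := (hrp.const_mul (δ * σ)).mul (hnp.pow 7)
      simpa using this
    have hle : 2 * ‖v i.succ.succ‖ ≤ 0 := le_of_tendsto_of_tendsto' hL hR key
    have : ‖v i.succ.succ‖ = 0 := by linarith [norm_nonneg (v i.succ.succ)]
    exact norm_eq_zero.mp this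
end

section
/- Let b, c ∈ ℂ with b ≠ 0, let m ≥ 0 be an integer, and let f = f_{b,c} : ℂ × ℂ × ℂ^m → ℂ, f(x,y,z) = x³ + b x² y³ + y⁹ + c x y⁷ + z₁² + ⋯ + z_m². Fix δ > 1, σ > 0 and set Ω = Ω(f, δ, σ, 9). Then: (a) there exist C > 0 and ρ₀ > 0 such that every (x,y,z) ∈ Ω with ‖(x,y,z)‖ < ρ₀ satisfies ‖z‖ ≤ C·|y|⁸; and (b) for every ε > 0 there exists ρ > 0 such that every (x,y,z) ∈ Ω with ‖(x,y,z)‖ < ρ satisfies min( |x + (2b/3)·y³ − (c/(2b))·y⁴| , |x + (c/(2b))·y⁴| ) ≤ ε·|y|⁴ (i.e. either x = −(2b/3)y³ + (c/(2b))y⁴ + o(y⁴) or x = −(c/(2b))y⁴ + o(y⁴) on the germ of Ω at 0). -/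
open Filter

lemma eucl_sq (m : ℕ) (q : EuclideanSpace ℂ (Fin (m + 2))) :
    ‖q‖ ^ 2 = ‖q 0‖ ^ 2 + ‖q 1‖ ^ 2 + ∑ i : Fin m, ‖q i.succ.succ‖ ^ 2 := by
  rw [EuclideanSpace.norm_eq, Real.sq_sqrt (by positivity)]
  rw [Fin.sum_univ_succ, Fin.sum_univ_succ]
  have : (Fin.succ 0 : Fin (m + 2)) = 1 := rfl
  rw [this]; ring

lemma coord_le (m : ℕ) (q : EuclideanSpace ℂ (Fin (m + 2))) (i : Fin (m + 2)) :
    ‖q i‖ ≤ ‖q‖ := by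
  have h : ‖q i‖ ^ 2 ≤ ‖q‖ ^ 2 := by
    rw [EuclideanSpace.norm_eq, Real.sq_sqrt (by positivity)]
    exact Finset.single_le_sum (f := fun j => ‖q j‖ ^ 2) (fun j _ => by positivity)
      (Finset.mem_univ i)
  nlinarith [norm_nonneg (q i), norm_nonneg q]

lemma gradJ_zero (b c : ℂ) (m : ℕ) (p : EuclideanSpace ℂ (Fin (m + 2))) :
    gradJ b c m p 0 = 3 * (p 0) ^ 2 + 2 * b * (p 0) * (p 1) ^ 3 + c * (p 1) ^ 7 := by
  simp [gradJ]

lemma gradJ_z (b c : ℂ) (m : ℕ) (p : EuclideanSpace ℂ (Fin (m + 2))) (i : Fin m) :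
    gradJ b c m p i.succ.succ = 2 * p i.succ.succ := by
  simp [gradJ, Fin.val_succ]

set_option maxHeartbeats 800000 in
lemma key (b c : ℂ) (m : ℕ) (δ σ : ℝ) (hδ : 1 < δ) (hσ : 0 < σ) :
    ∃ ρ₁ > (0:ℝ), ∀ p ∈ OmegaJ b c m δ σ, ‖p‖ < ρ₁ →
      0 < ‖p 1‖ ∧ ‖p‖ ≤ 2 * ‖p 1‖ ∧ ‖gradJ b c m p‖ ≤ δ * σ * ‖p‖ ^ 8 ∧
      Real.sqrt (∑ i : Fin m, ‖p i.succ.succ‖ ^ 2) ≤ δ * σ / 2 * ‖p‖ ^ 8 := by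
  have hδ0 : (0:ℝ) < δ := by linarith
  set M : ℝ := δ * σ + 2 * ‖b‖ + ‖c‖ with hMdef
  have hM0 : 0 < M := by positivity
  refine ⟨min 1 (min (Real.sqrt (3 / (4 * M))) (1 / (δ * σ))), by positivity, ?_⟩
  intro p hp hlt
  obtain ⟨hf0, h1, h2, h3⟩ := hp
  have hp0 : p ≠ 0 := by
    rintro rfl
    exact hf0 (by simp [fJ])
  have hpn : 0 < ‖p‖ := norm_pos_iff.2 hp0
  have hple1 : ‖p‖ ≤ 1 := le_of_lt (lt_of_lt_of_le hlt (min_le_left _ _))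
  have hsq : ‖p‖ ^ 2 ≤ 3 / (4 * M) := by
    have h := lt_of_lt_of_le hlt (le_trans (min_le_right _ _) (min_le_left _ _))
    nlinarith [Real.sq_sqrt (show (0:ℝ) ≤ 3 / (4 * M) by positivity),
      Real.sqrt_nonneg (3 / (4 * M))]
  have hinv : ‖p‖ ≤ 1 / (δ * σ) :=
    le_of_lt (lt_of_lt_of_le hlt (le_trans (min_le_right _ _) (min_le_right _ _)))
  set g := gradJ b c m p with hgdef
  have hg : ‖g‖ ≤ δ * σ * ‖p‖ ^ 8 := by
    have h1' : ‖p‖ * ‖g‖ ≤ δ * ‖fJ b c m p‖ := by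
      calc ‖p‖ * ‖g‖ = δ * (δ⁻¹ * ‖p‖ * ‖g‖) := by field_simp
        _ ≤ δ * ‖fJ b c m p‖ := by
            exact mul_le_mul_of_nonneg_left h1 (le_of_lt hδ0)
    have h2' : ‖p‖ * ‖g‖ ≤ δ * σ * ‖p‖ ^ 9 := by nlinarith
    nlinarith [norm_nonneg g]
  -- coordinate bounds
  have hx1 : ‖p 0‖ ≤ ‖p‖ := coord_le m p 0
  have hy1 : ‖p 1‖ ≤ ‖p‖ := coord_le m p 1
  have hg0 : ‖3 * (p 0) ^ 2 + 2 * b * (p 0) * (p 1) ^ 3 + c * (p 1) ^ 7‖ ≤ δ * σ * ‖p‖ ^ 8 := by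
    rw [← gradJ_zero b c m p]
    exact le_trans (coord_le m g 0) hg
  have hx2 : 3 * ‖p 0‖ ^ 2 ≤ δ * σ * ‖p‖ ^ 8 + 2 * ‖b‖ * ‖p‖ ^ 4 + ‖c‖ * ‖p‖ ^ 7 := by
    have e : (3:ℂ) * (p 0) ^ 2 =
        (3 * (p 0) ^ 2 + 2 * b * (p 0) * (p 1) ^ 3 + c * (p 1) ^ 7)
          - 2 * b * (p 0) * (p 1) ^ 3 - c * (p 1) ^ 7 := by ring
    have t1 : ‖2 * b * (p 0) * (p 1) ^ 3‖ ≤ 2 * ‖b‖ * ‖p‖ ^ 4 := by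
      rw [norm_mul, norm_mul, norm_mul, norm_pow]
      simp only [Complex.norm_ofNat]
      calc 2 * ‖b‖ * ‖p 0‖ * ‖p 1‖ ^ 3 ≤ 2 * ‖b‖ * ‖p‖ * ‖p‖ ^ 3 := by
            gcongr
        _ = 2 * ‖b‖ * ‖p‖ ^ 4 := by ring
    have t2 : ‖c * (p 1) ^ 7‖ ≤ ‖c‖ * ‖p‖ ^ 7 := by
      rw [norm_mul, norm_pow]; gcongr
    have t0 : ‖(3:ℂ) * (p 0) ^ 2‖ = 3 * ‖p 0‖ ^ 2 := by
      rw [norm_mul, norm_pow]; simp [Complex.norm_ofNat]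
    have e' : ‖(3:ℂ) * (p 0) ^ 2‖ = ‖3 * (p 0) ^ 2 + 2 * b * (p 0) * (p 1) ^ 3 + c * (p 1) ^ 7
        - 2 * b * (p 0) * (p 1) ^ 3 - c * (p 1) ^ 7‖ := congrArg norm e
    have n1 := norm_sub_le (3 * (p 0) ^ 2 + 2 * b * (p 0) * (p 1) ^ 3 + c * (p 1) ^ 7
        - 2 * b * (p 0) * (p 1) ^ 3) (c * (p 1) ^ 7)
    have n2 := norm_sub_le (3 * (p 0) ^ 2 + 2 * b * (p 0) * (p 1) ^ 3 + c * (p 1) ^ 7)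
        (2 * b * (p 0) * (p 1) ^ 3)
    rw [← t0, e']
    linarith
  have h84 : ‖p‖ ^ 8 ≤ ‖p‖ ^ 4 := pow_le_pow_of_le_one (norm_nonneg p) hple1 (by norm_num)
  have h74 : ‖p‖ ^ 7 ≤ ‖p‖ ^ 4 := pow_le_pow_of_le_one (norm_nonneg p) hple1 (by norm_num)
  have hMp : M * ‖p‖ ^ 4 ≤ (3 / 4) * ‖p‖ ^ 2 := by
    have h := mul_le_mul_of_nonneg_left hsq (le_of_lt (mul_pos hM0 (pow_pos hpn 2)))
    have hne : (4 : ℝ) * M ≠ 0 := by positivity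
    calc M * ‖p‖ ^ 4 = M * ‖p‖ ^ 2 * ‖p‖ ^ 2 := by ring
      _ ≤ M * ‖p‖ ^ 2 * (3 / (4 * M)) := h
      _ = (3 / 4) * ‖p‖ ^ 2 := by field_simp
  have hx : ‖p 0‖ ^ 2 ≤ ‖p‖ ^ 2 / 4 := by
    have e1 : δ * σ * ‖p‖ ^ 8 ≤ δ * σ * ‖p‖ ^ 4 :=
      mul_le_mul_of_nonneg_left h84 (by positivity)
    have e2 : ‖c‖ * ‖p‖ ^ 7 ≤ ‖c‖ * ‖p‖ ^ 4 :=
      mul_le_mul_of_nonneg_left h74 (norm_nonneg c)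
    have hMexp : M * ‖p‖ ^ 4 = δ * σ * ‖p‖ ^ 4 + 2 * ‖b‖ * ‖p‖ ^ 4 + ‖c‖ * ‖p‖ ^ 4 := by
      rw [hMdef]; ring
    linarith
  -- the z-part
  have hZnn : (0:ℝ) ≤ ∑ i : Fin m, ‖p i.succ.succ‖ ^ 2 :=
    Finset.sum_nonneg fun i _ => by positivity
  set Z := Real.sqrt (∑ i : Fin m, ‖p i.succ.succ‖ ^ 2) with hZdef
  have hZsq : Z ^ 2 = ∑ i : Fin m, ‖p i.succ.succ‖ ^ 2 := Real.sq_sqrt hZnn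
  have hsum : 4 * ∑ i : Fin m, ‖p i.succ.succ‖ ^ 2 ≤ ‖g‖ ^ 2 := by
    have hge : ‖g‖ ^ 2 = ‖g 0‖ ^ 2 + ‖g 1‖ ^ 2 + ∑ i : Fin m, ‖g i.succ.succ‖ ^ 2 :=
      eucl_sq m g
    have hgz : ∀ i : Fin m, ‖g i.succ.succ‖ ^ 2 = 4 * ‖p i.succ.succ‖ ^ 2 := by
      intro i
      rw [hgdef, gradJ_z, norm_mul]
      simp [Complex.norm_ofNat]; ring
    have : ∑ i : Fin m, ‖g i.succ.succ‖ ^ 2 = 4 * ∑ i : Fin m, ‖p i.succ.succ‖ ^ 2 := by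
      rw [Finset.mul_sum]; exact Finset.sum_congr rfl fun i _ => hgz i
    nlinarith [sq_nonneg ‖g 0‖, sq_nonneg ‖g 1‖]
  have hZg : Z ≤ ‖g‖ / 2 := by
    have h' : Z ^ 2 ≤ (‖g‖ / 2) ^ 2 := by rw [hZsq]; nlinarith
    nlinarith [Real.sqrt_nonneg (∑ i : Fin m, ‖p i.succ.succ‖ ^ 2), norm_nonneg g]
  have hZ : Z ≤ δ * σ / 2 * ‖p‖ ^ 8 := by linarith
  have hZp : Z ≤ ‖p‖ / 2 := by
    have h82 : ‖p‖ ^ 8 ≤ ‖p‖ ^ 2 := pow_le_pow_of_le_one (norm_nonneg p) hple1 (by norm_num)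
    have hδσ : δ * σ * ‖p‖ ≤ 1 := by
      have h0 : 0 < δ * σ := mul_pos hδ0 hσ
      rw [div_eq_mul_inv, one_mul] at hinv
      calc δ * σ * ‖p‖ ≤ δ * σ * (δ * σ)⁻¹ := by gcongr
        _ = 1 := mul_inv_cancel₀ (ne_of_gt h0)
    have : δ * σ * ‖p‖ ^ 8 ≤ ‖p‖ := by
      calc δ * σ * ‖p‖ ^ 8 ≤ δ * σ * ‖p‖ ^ 2 :=
          mul_le_mul_of_nonneg_left h82 (by positivity)
        _ = (δ * σ * ‖p‖) * ‖p‖ := by ring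
        _ ≤ 1 * ‖p‖ := by nlinarith
        _ = ‖p‖ := one_mul _
    linarith
  have hZ2 : (∑ i : Fin m, ‖p i.succ.succ‖ ^ 2) ≤ ‖p‖ ^ 2 / 4 := by
    rw [← hZsq]
    nlinarith [Real.sqrt_nonneg (∑ i : Fin m, ‖p i.succ.succ‖ ^ 2)]
  have hy2 : ‖p‖ ^ 2 ≤ 4 * ‖p 1‖ ^ 2 := by
    have he := eucl_sq m p
    nlinarith
  have hpy : ‖p‖ ≤ 2 * ‖p 1‖ := by nlinarith [norm_nonneg (p 1)]
  exact ⟨by linarith, hpy, hg, hZ⟩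


set_option maxHeartbeats 1200000

/-- On the germ at `0` of `Ω(f_{b,c}, δ, σ, 9)` (with `b ≠ 0`):
(a) `‖z‖ ≤ C |y|⁸` for some constant `C > 0`, and
(b) either `x = -(2b/3)y³ + (c/(2b))y⁴ + o(y⁴)` or `x = -(c/(2b))y⁴ + o(y⁴)`. -/
theorem omega_structure (b c : ℂ) (hb : b ≠ 0) (m : ℕ) (δ σ : ℝ)
    (hδ : 1 < δ) (hσ : 0 < σ) :
    (∃ C > (0 : ℝ), ∃ ρ₀ > (0 : ℝ), ∀ p ∈ OmegaJ b c m δ σ, ‖p‖ < ρ₀ →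
      Real.sqrt (∑ i : Fin m, ‖p i.succ.succ‖ ^ 2) ≤ C * ‖p 1‖ ^ 8) ∧
    (∀ ε > (0 : ℝ), ∃ ρ > (0 : ℝ), ∀ p ∈ OmegaJ b c m δ σ, ‖p‖ < ρ →
      min ‖p 0 + (2 * b / 3) * (p 1) ^ 3 - (c / (2 * b)) * (p 1) ^ 4‖
          ‖p 0 + (c / (2 * b)) * (p 1) ^ 4‖ ≤ ε * ‖p 1‖ ^ 4) := by
  obtain ⟨ρ₁, hρ₁, hkey⟩ := key b c m δ σ hδ hσ
  have hδ0 : (0:ℝ) < δ := by linarith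
  have hb0 : (0:ℝ) < ‖b‖ := norm_pos_iff.2 hb
  constructor
  · refine ⟨128 * δ * σ, by positivity, ρ₁, hρ₁, ?_⟩
    intro p hp hlt
    obtain ⟨hy0, hpy, hg, hZ⟩ := hkey p hp hlt
    have h8 : ‖p‖ ^ 8 ≤ (2 * ‖p 1‖) ^ 8 := pow_le_pow_left₀ (norm_nonneg p) hpy 8
    calc Real.sqrt (∑ i : Fin m, ‖p i.succ.succ‖ ^ 2) ≤ δ * σ / 2 * ‖p‖ ^ 8 := hZ
      _ ≤ δ * σ / 2 * (2 * ‖p 1‖) ^ 8 := by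
          exact mul_le_mul_of_nonneg_left h8 (by positivity)
      _ = 128 * δ * σ * ‖p 1‖ ^ 8 := by ring
  · intro ε hε
    set C₂ : ℝ := 256 * δ * σ + 3 * ‖c‖ ^ 2 / (4 * ‖b‖ ^ 2) with hC2
    have hC20 : 0 < C₂ := by positivity
    refine ⟨min ρ₁ (min (‖b‖ ^ 2 / (3 * ‖c‖ + 1)) (ε * ‖b‖ / (2 * C₂))), by positivity, ?_⟩
    intro p hp hlt
    obtain ⟨hy0, hpy, hg, -⟩ := hkey p hp (lt_of_lt_of_le hlt (min_le_left _ _))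
    set x := p 0 with hx
    set y := p 1 with hy
    set A := x + (2 * b / 3) * y ^ 3 - (c / (2 * b)) * y ^ 4 with hA
    set B := x + (c / (2 * b)) * y ^ 4 with hB
    have hyc : ‖c‖ * ‖y‖ ≤ ‖b‖ ^ 2 / 3 := by
      have h' : ‖y‖ < ‖b‖ ^ 2 / (3 * ‖c‖ + 1) :=
        lt_of_le_of_lt (coord_le m p 1)
          (lt_of_lt_of_le hlt (le_trans (min_le_right _ _) (min_le_left _ _)))
      rw [lt_div_iff₀ (by positivity)] at h'
      nlinarith [norm_nonneg (p 1), norm_nonneg c]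
    have hyε : 2 * C₂ * ‖y‖ ≤ ε * ‖b‖ := by
      have h' : ‖y‖ < ε * ‖b‖ / (2 * C₂) :=
        lt_of_le_of_lt (coord_le m p 1)
          (lt_of_lt_of_le hlt (le_trans (min_le_right _ _) (min_le_right _ _)))
      rw [lt_div_iff₀ (by positivity)] at h'
      nlinarith
    have hAB : (3:ℂ) * A * B =
        (3 * x ^ 2 + 2 * b * x * y ^ 3 + c * y ^ 7) - (3 * c ^ 2 / (4 * b ^ 2)) * y ^ 8 := by
      rw [hA, hB]; field_simp; ring
    have hg0 : ‖3 * x ^ 2 + 2 * b * x * y ^ 3 + c * y ^ 7‖ ≤ δ * σ * ‖p‖ ^ 8 := by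
      rw [hx, hy, ← gradJ_zero b c m p]
      exact le_trans (coord_le m _ 0) hg
    have h8 : ‖p‖ ^ 8 ≤ 256 * ‖y‖ ^ 8 := by
      have h8' : ‖p‖ ^ 8 ≤ (2 * ‖p 1‖) ^ 8 := pow_le_pow_left₀ (norm_nonneg p) hpy 8
      have : (2 * ‖p 1‖) ^ 8 = 256 * ‖p 1‖ ^ 8 := by ring
      rw [hy]; linarith
    have hABn : 3 * (‖A‖ * ‖B‖) ≤ C₂ * ‖y‖ ^ 8 := by
      have t : ‖(3:ℂ) * A * B‖ = 3 * (‖A‖ * ‖B‖) := by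
        rw [norm_mul, norm_mul]
        simp [Complex.norm_ofNat]
        ring
      have t2 : ‖(3 * c ^ 2 / (4 * b ^ 2)) * y ^ 8‖ = 3 * ‖c‖ ^ 2 / (4 * ‖b‖ ^ 2) * ‖y‖ ^ 8 := by
        simp [norm_mul, norm_div, norm_pow, Complex.norm_ofNat]
      have e' := congrArg norm hAB
      have hstep := norm_sub_le (3 * x ^ 2 + 2 * b * x * y ^ 3 + c * y ^ 7)
        ((3 * c ^ 2 / (4 * b ^ 2)) * y ^ 8)
      have h8' : δ * σ * ‖p‖ ^ 8 ≤ δ * σ * (256 * ‖y‖ ^ 8) :=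
        mul_le_mul_of_nonneg_left h8 (by positivity)
      have hCexp : C₂ * ‖y‖ ^ 8 = δ * σ * (256 * ‖y‖ ^ 8)
          + 3 * ‖c‖ ^ 2 / (4 * ‖b‖ ^ 2) * ‖y‖ ^ 8 := by rw [hC2]; ring
      rw [t] at e'
      rw [e', hCexp]
      calc ‖3 * x ^ 2 + 2 * b * x * y ^ 3 + c * y ^ 7 - 3 * c ^ 2 / (4 * b ^ 2) * y ^ 8‖
          ≤ ‖3 * x ^ 2 + 2 * b * x * y ^ 3 + c * y ^ 7‖
            + ‖3 * c ^ 2 / (4 * b ^ 2) * y ^ 8‖ := hstep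
        _ ≤ δ * σ * (256 * ‖y‖ ^ 8) + 3 * ‖c‖ ^ 2 / (4 * ‖b‖ ^ 2) * ‖y‖ ^ 8 := by
            rw [t2]; linarith
    have hABd : A - B = (2 * b / 3) * y ^ 3 - (c / b) * y ^ 4 := by
      rw [hA, hB]; field_simp; ring
    have hdn : ‖b‖ / 3 * ‖y‖ ^ 3 ≤ ‖A‖ + ‖B‖ := by
      have h1 : ‖(2 * b / 3 : ℂ) * y ^ 3‖ = 2 * ‖b‖ / 3 * ‖y‖ ^ 3 := by
        simp [norm_mul, norm_div, Complex.norm_ofNat]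
      have h2 : ‖(c / b) * y ^ 4‖ = ‖c‖ / ‖b‖ * ‖y‖ ^ 4 := by
        simp [norm_mul, norm_div]
      have h3 : ‖(2 * b / 3 : ℂ) * y ^ 3‖ - ‖(c / b) * y ^ 4‖ ≤ ‖A - B‖ := by
        rw [hABd]; exact norm_sub_norm_le _ _
      have h4 : ‖A - B‖ ≤ ‖A‖ + ‖B‖ := norm_sub_le A B
      have h5 : ‖c‖ / ‖b‖ * ‖y‖ ^ 4 ≤ ‖b‖ / 3 * ‖y‖ ^ 3 := by
        rw [div_mul_eq_mul_div, div_le_iff₀ hb0]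
        nlinarith [mul_le_mul_of_nonneg_right hyc (pow_nonneg (norm_nonneg y) 3)]
      rw [h1, h2] at h3
      linarith
    have hmain : ∀ a a' : ℝ, 0 ≤ a → a ≤ a' → 3 * (a * a') ≤ C₂ * ‖y‖ ^ 8 →
        ‖b‖ / 3 * ‖y‖ ^ 3 ≤ a + a' → a ≤ ε * ‖y‖ ^ 4 := by
      intro a a' ha haa h1 h2
      have hq : a * (‖b‖ / 3 * ‖y‖ ^ 3) ≤ (ε * ‖y‖ ^ 4) * (‖b‖ / 3 * ‖y‖ ^ 3) := by
        have s1 : a * (‖b‖ / 3 * ‖y‖ ^ 3) ≤ a * (a + a') :=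
          mul_le_mul_of_nonneg_left h2 ha
        have s2 : a * (a + a') ≤ 2 * (a * a') := by nlinarith
        have s4 := mul_le_mul_of_nonneg_right hyε (pow_nonneg (norm_nonneg y) 7)
        nlinarith
      exact le_of_mul_le_mul_right hq (by positivity)
    rcases le_total ‖A‖ ‖B‖ with hc' | hc'
    · rw [min_eq_left hc']
      exact hmain ‖A‖ ‖B‖ (norm_nonneg A) hc' hABn hdn
    · rw [min_eq_right hc']
      exact hmain ‖B‖ ‖A‖ (norm_nonneg B) hc' (by linarith [hABn, mul_comm ‖A‖ ‖B‖]) (by linarith)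
end

section
/- Let n ≥ 1 and let A ⊂ ℕⁿ be a finite nonempty set. Define ρ : ℂⁿ → ℝ by ρ(x) = Σ_{α ∈ A} Π_{i=1}^n |x_i|^{α_i} (with the convention 0⁰ = 1). Let u = (u₁,…,u_n) ∈ ℝ_{≥0}ⁿ belong to the Newton polyhedron Γ₊(A) = conv(A) + ℝ_{≥0}ⁿ (the Minkowski sum of the convex hull of A and the nonnegative orthant in ℝⁿ). Then there exist C > 0 and a neighborhood U of 0 in ℂⁿ such that for all x ∈ U, ρ(x) ≥ C · Π_{i=1}^n |x_i|^{u_i}, where |x_i|^{u_i} denotes the real power with the convention 0⁰ = 1. -/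
/-!
For `t ∈ [0, 1]ⁿ` the monomial `v ↦ ∏ tᵢ ^ vᵢ` is antitone in the exponent, and by the weighted
AM-GM inequality it is convex on the nonnegative orthant. Writing `u = a + r` with `a ∈ conv(A)`,
`r ≥ 0`, on the unit ball we get `∏ |xᵢ| ^ uᵢ ≤ ∏ |xᵢ| ^ aᵢ`, and by the maximum principle for
convex functions the latter is bounded by `∏ |xᵢ| ^ αᵢ` for some vertex `α ∈ A`, hence by `ρ(x)`;
so `C = 1` works.
-/

open Filter Set

section

variable {ι : Type*} [Fintype ι]

lemma prod_rpow_le_prod_rpow_of_le {t a u : ι → ℝ} (ht₀ : 0 ≤ t) (ht₁ : t ≤ 1) (ha : 0 ≤ a)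
    (hau : a ≤ u) : ∏ i, t i ^ u i ≤ ∏ i, t i ^ a i :=
  Finset.prod_le_prod (fun i _ => Real.rpow_nonneg (ht₀ i) _)
    fun i _ => Real.rpow_le_rpow_of_exponent_ge' (ht₀ i) (ht₁ i) (ha i) (hau i)

lemma convexOn_prod_rpow {t : ι → ℝ} (ht : 0 ≤ t) :
    ConvexOn ℝ (Ici 0) fun v : ι → ℝ => ∏ i, t i ^ v i := by
  refine ⟨convex_Ici 0, fun v hv w hw a b ha hb hab => ?_⟩
  -- `0 ≤ v, w` lets `rpow_add` hold even at `tᵢ = 0`, where `0 ^ 0 = 1`.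
  have hsplit : ∏ i, t i ^ (a • v + b • w) i = (∏ i, t i ^ v i) ^ a * (∏ i, t i ^ w i) ^ b := by
    rw [← Real.finsetProd_rpow _ _ fun i _ => Real.rpow_nonneg (ht i) _,
      ← Real.finsetProd_rpow _ _ fun i _ => Real.rpow_nonneg (ht i) _, ← Finset.prod_mul_distrib]
    refine Finset.prod_congr rfl fun i _ => ?_
    rw [Pi.add_apply, Pi.smul_apply, Pi.smul_apply, smul_eq_mul, smul_eq_mul,
      Real.rpow_add_of_nonneg (ht i) (mul_nonneg ha (hv i)) (mul_nonneg hb (hw i)),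
      ← Real.rpow_mul (ht i), ← Real.rpow_mul (ht i), mul_comm a, mul_comm b]
  show ∏ i, t i ^ (a • v + b • w) i ≤ a * ∏ i, t i ^ v i + b * ∏ i, t i ^ w i
  rw [hsplit]
  exact Real.geom_mean_le_arith_mean2_weighted ha hb
    (Finset.prod_nonneg fun i _ => Real.rpow_nonneg (ht i) _)
    (Finset.prod_nonneg fun i _ => Real.rpow_nonneg (ht i) _) hab

end

theorem rho_ge_monomial_of_mem_newton_polyhedron_general (n : ℕ)
    (A : Finset (Fin n → ℕ))
    (u : Fin n → ℝ)
    (huA : ∃ a ∈ convexHull ℝ ((fun α : Fin n → ℕ => fun i => (α i : ℝ)) '' ↑A),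
      ∃ r : Fin n → ℝ, (∀ i, 0 ≤ r i) ∧ u = a + r) :
    ∃ C > (0 : ℝ), ∃ U ∈ nhds (0 : Fin n → ℂ), ∀ x ∈ U,
      C * ∏ i, ‖x i‖ ^ (u i) ≤ ∑ α ∈ A, ∏ i, ‖x i‖ ^ (α i) := by
  obtain ⟨a, ha, r, hr, rfl⟩ := huA
  have hA : (fun α : Fin n → ℕ => fun i => (α i : ℝ)) '' ↑A ⊆ Ici 0 := by
    rintro _ ⟨α, -, rfl⟩ i
    exact Nat.cast_nonneg _
  have ha₀ : 0 ≤ a := convexHull_min hA (convex_Ici 0) ha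
  refine ⟨1, one_pos, Metric.ball 0 1, Metric.ball_mem_nhds _ one_pos, fun x hx => ?_⟩
  have hx₀ : 0 ≤ fun i => ‖x i‖ := fun i => norm_nonneg (x i)
  have hx₁ : (fun i => ‖x i‖) ≤ 1 := fun i =>
    (norm_le_pi_norm x i).trans (mem_ball_zero_iff.1 hx).le
  obtain ⟨_, ⟨α, hα, rfl⟩, hα_max⟩ := (convexOn_prod_rpow hx₀).exists_ge_of_mem_convexHull hA ha
  calc 1 * ∏ i, ‖x i‖ ^ (a + r) i
      = ∏ i, ‖x i‖ ^ (a + r) i := one_mul _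
    _ ≤ ∏ i, ‖x i‖ ^ a i :=
        prod_rpow_le_prod_rpow_of_le hx₀ hx₁ ha₀ (le_add_of_nonneg_right hr)
    _ ≤ ∏ i, ‖x i‖ ^ (α i : ℝ) := hα_max
    _ = ∏ i, ‖x i‖ ^ α i := by simp only [Real.rpow_natCast]
    _ ≤ ∑ β ∈ A, ∏ i, ‖x i‖ ^ β i :=
        Finset.single_le_sum (f := fun β : Fin n → ℕ => ∏ i, ‖x i‖ ^ β i)
          (fun β _ => Finset.prod_nonneg fun i _ => pow_nonneg (norm_nonneg (x i)) _) hα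

/-- If `u ∈ Γ₊(A) = conv(A) + ℝ_{≥0}ⁿ`, then near `0` one has
`ρ(x) = Σ_{α ∈ A} Π |xᵢ|^{αᵢ} ≥ C · Π |xᵢ|^{uᵢ}` for some `C > 0`. -/
theorem rho_ge_monomial_of_mem_newton_polyhedron (n : ℕ) (hn : 1 ≤ n)
    (A : Finset (Fin n → ℕ)) (hA : A.Nonempty)
    (u : Fin n → ℝ) (hu : ∀ i, 0 ≤ u i)
    (huA : ∃ a ∈ convexHull ℝ ((fun α : Fin n → ℕ => fun i => (α i : ℝ)) '' ↑A),
      ∃ r : Fin n → ℝ, (∀ i, 0 ≤ r i) ∧ u = a + r) :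
    ∃ C > (0 : ℝ), ∃ U ∈ nhds (0 : Fin n → ℂ), ∀ x ∈ U,
      C * ∏ i, ‖x i‖ ^ (u i) ≤ ∑ α ∈ A, ∏ i, ‖x i‖ ^ (α i) :=
  rho_ge_monomial_of_mem_newton_polyhedron_general n A u huA
end

section
/- Let n ≥ 1 and let A ⊂ ℕⁿ be a finite nonempty set which is convenient, meaning that for each i = 1,…,n there is an integer a_i > 0 with a_i·e_i ∈ A (e_i the i-th standard basis vector); then ρ(x) = Σ_{α ∈ A} Π_{i=1}^n |x_i|^{α_i} is strictly positive for x ≠ 0. Let u ∈ ℝ_{≥0}ⁿ and suppose there exists a nonzero vector v ∈ ℝ_{≥0}ⁿ with u − v ∈ Γ₊(A) = conv(A) + ℝ_{≥0}ⁿ. Then lim_{x → 0, x ≠ 0} ( Π_{i=1}^n |x_i|^{u_i} ) / ρ(x) = 0. -/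
/-!
Write `u = a + r + v` with `a ∈ conv(A)` and `r, v ≥ 0`. The monomial `y ↦ ∏ yᵢ ^ aᵢ` is
log-linear in the exponent, so by weighted AM-GM the exponents `a` with `∏ yᵢ ^ aᵢ ≤ ρ(y)`
form a convex set; it contains `A`, hence `conv(A)`. On the unit cube the factor
`∏ yᵢ ^ (rᵢ + vᵢ)` is at most `y_j ^ v_j` for a coordinate with `v_j > 0`, so
`∏ yᵢ ^ uᵢ ≤ y_j ^ v_j · ρ(y)`, and `y_j ^ v_j → 0`.
-/

open Filter

section Monomial

variable {ι : Type*} [Fintype ι] {y : ι → ℝ}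

lemma prod_rpow_add (hy : ∀ i, 0 ≤ y i) {a b : ι → ℝ} (ha : ∀ i, 0 ≤ a i)
    (hb : ∀ i, 0 ≤ b i) :
    ∏ i, y i ^ (a i + b i) = (∏ i, y i ^ a i) * ∏ i, y i ^ b i := by
  rw [← Finset.prod_mul_distrib]
  exact Finset.prod_congr rfl fun i _ => Real.rpow_add_of_nonneg (hy i) (ha i) (hb i)

lemma prod_rpow_mul (hy : ∀ i, 0 ≤ y i) (s : ℝ) (a : ι → ℝ) :
    ∏ i, y i ^ (s * a i) = (∏ i, y i ^ a i) ^ s := by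
  rw [← Real.finsetProd_rpow _ _ fun i _ => Real.rpow_nonneg (hy i) _]
  exact Finset.prod_congr rfl fun i _ => by rw [mul_comm, Real.rpow_mul (hy i)]

lemma convex_setOf_prod_rpow_le (hy : ∀ i, 0 ≤ y i) (c : ℝ) :
    Convex ℝ {a : ι → ℝ | (∀ i, 0 ≤ a i) ∧ ∏ i, y i ^ a i ≤ c} := by
  rintro a ⟨ha, hac⟩ b ⟨hb, hbc⟩ s t hs ht hst
  have hsa : ∀ i, 0 ≤ s * a i := fun i => mul_nonneg hs (ha i)
  have htb : ∀ i, 0 ≤ t * b i := fun i => mul_nonneg ht (hb i)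
  refine ⟨fun i => add_nonneg (hsa i) (htb i), ?_⟩
  simp only [Pi.add_apply, Pi.smul_apply, smul_eq_mul]
  calc ∏ i, y i ^ (s * a i + t * b i)
      = (∏ i, y i ^ a i) ^ s * (∏ i, y i ^ b i) ^ t := by
        rw [prod_rpow_add hy hsa htb, prod_rpow_mul hy, prod_rpow_mul hy]
    _ ≤ s * ∏ i, y i ^ a i + t * ∏ i, y i ^ b i :=
        Real.geom_mean_le_arith_mean2_weighted hs ht
          (Finset.prod_nonneg fun i _ => Real.rpow_nonneg (hy i) _)
          (Finset.prod_nonneg fun i _ => Real.rpow_nonneg (hy i) _) hst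
    _ ≤ s * c + t * c := by gcongr
    _ = c := by rw [← add_mul, hst, one_mul]

lemma prod_rpow_le_of_le_one (hy0 : ∀ i, 0 ≤ y i) (hy1 : ∀ i, y i ≤ 1) {e : ι → ℝ}
    (he : ∀ i, 0 ≤ e i) (j : ι) :
    ∏ i, y i ^ e i ≤ y j ^ e j := by
  classical
  rw [← Finset.mul_prod_erase _ _ (Finset.mem_univ j)]
  exact mul_le_of_le_one_right (Real.rpow_nonneg (hy0 j) _)
    (Finset.prod_le_one (fun i _ => Real.rpow_nonneg (hy0 i) _)
      fun i _ => Real.rpow_le_one (hy0 i) (hy1 i) (he i))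

variable (A : Finset (ι → ℕ))

lemma sum_prod_pow_pos [DecidableEq ι]
    (hA : ∀ i, ∃ a : ℕ, 0 < a ∧ (Pi.single i a : ι → ℕ) ∈ A)
    (hy : ∀ i, 0 ≤ y i) {j : ι} (hj : 0 < y j) :
    0 < ∑ α ∈ A, ∏ i, y i ^ α i := by
  obtain ⟨a, ha, haA⟩ := hA j
  have hsingle : ∏ i, y i ^ (Pi.single j a : ι → ℕ) i = y j ^ a := by
    rw [Finset.prod_eq_single j (fun i _ hij => by rw [Pi.single_eq_of_ne hij, pow_zero])
      (by simp), Pi.single_eq_same]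
  refine (pow_pos hj a).trans_le (hsingle ▸ ?_)
  exact Finset.single_le_sum (f := fun α : ι → ℕ => ∏ i, y i ^ α i)
    (fun α _ => Finset.prod_nonneg fun i _ => pow_nonneg (hy i) _) haA

lemma convexHull_subset_setOf_prod_rpow_le (hy : ∀ i, 0 ≤ y i) :
    convexHull ℝ ((fun α : ι → ℕ => fun i => (α i : ℝ)) '' ↑A) ⊆
      {a | (∀ i, 0 ≤ a i) ∧ ∏ i, y i ^ a i ≤ ∑ α ∈ A, ∏ i, y i ^ α i} := by
  refine convexHull_min ?_ (convex_setOf_prod_rpow_le hy _)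
  rintro _ ⟨α, hα, rfl⟩
  refine ⟨fun i => Nat.cast_nonneg _, ?_⟩
  simp only [Real.rpow_natCast]
  exact Finset.single_le_sum (f := fun α : ι → ℕ => ∏ i, y i ^ α i)
    (fun β _ => Finset.prod_nonneg fun i _ => pow_nonneg (hy i) _) hα

lemma prod_rpow_le_rpow_mul_sum_prod_pow (hy0 : ∀ i, 0 ≤ y i) (hy1 : ∀ i, y i ≤ 1)
    {a r u v : ι → ℝ}
    (ha : a ∈ convexHull ℝ ((fun α : ι → ℕ => fun i => (α i : ℝ)) '' ↑A))
    (hr : ∀ i, 0 ≤ r i) (hv : ∀ i, 0 ≤ v i) (huv : u - v = a + r) (j : ι) :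
    ∏ i, y i ^ u i ≤ y j ^ v j * ∑ α ∈ A, ∏ i, y i ^ α i := by
  obtain ⟨ha0, haA⟩ := convexHull_subset_setOf_prod_rpow_le A hy0 ha
  have hrv : ∀ i, 0 ≤ r i + v i := fun i => add_nonneg (hr i) (hv i)
  have hu : ∀ i, u i = a i + (r i + v i) := fun i => by
    rw [eq_add_of_sub_eq huv]; simp only [Pi.add_apply]; ring
  simp only [hu]
  calc ∏ i, y i ^ (a i + (r i + v i))
      = (∏ i, y i ^ a i) * ∏ i, y i ^ (r i + v i) := prod_rpow_add hy0 ha0 hrv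
    _ ≤ (∑ α ∈ A, ∏ i, y i ^ α i) * y j ^ v j := by
        refine mul_le_mul haA ?_ (Finset.prod_nonneg fun i _ => Real.rpow_nonneg (hy0 i) _)
          (Finset.sum_nonneg fun α _ => Finset.prod_nonneg fun i _ => pow_nonneg (hy0 i) _)
        exact (prod_rpow_le_of_le_one hy0 hy1 hrv j).trans
          (Real.rpow_le_rpow_of_exponent_ge' (hy0 j) (hy1 j) (hv j)
            (le_add_of_nonneg_left (hr j)))
    _ = y j ^ v j * ∑ α ∈ A, ∏ i, y i ^ α i := mul_comm _ _

end Monomial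

theorem monomial_div_rho_tendsto_zero_general (n : ℕ)
    (A : Finset (Fin n → ℕ))
    (hconv : ∀ i : Fin n, ∃ a : ℕ, 0 < a ∧ (Pi.single i a : Fin n → ℕ) ∈ A)
    (u : Fin n → ℝ)
    (v : Fin n → ℝ) (hv0 : v ≠ 0) (hv : ∀ i, 0 ≤ v i)
    (huv : ∃ a ∈ convexHull ℝ ((fun α : Fin n → ℕ => fun i => (α i : ℝ)) '' ↑A),
      ∃ r : Fin n → ℝ, (∀ i, 0 ≤ r i) ∧ u - v = a + r) :
    (∀ x : Fin n → ℂ, x ≠ 0 → 0 < ∑ α ∈ A, ∏ i, ‖x i‖ ^ (α i)) ∧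
    Tendsto (fun x : Fin n → ℂ =>
        (∏ i, ‖x i‖ ^ (u i)) / ∑ α ∈ A, ∏ i, ‖x i‖ ^ (α i))
      (nhdsWithin (0 : Fin n → ℂ) {x | x ≠ 0}) (nhds 0) := by
  have hρ : ∀ x : Fin n → ℂ, x ≠ 0 → 0 < ∑ α ∈ A, ∏ i, ‖x i‖ ^ (α i) := fun x hx => by
    obtain ⟨i, hi⟩ := Function.ne_iff.mp hx
    exact sum_prod_pow_pos A hconv (fun i => norm_nonneg (x i)) (norm_pos_iff.mpr hi)
  refine ⟨hρ, ?_⟩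
  obtain ⟨a, ha, r, hr, huv⟩ := huv
  obtain ⟨j, hj⟩ := Function.ne_iff.mp hv0
  have hvj : 0 < v j := (hv j).lt_of_ne' hj
  have hsmall : ∀ᶠ x : Fin n → ℂ in nhdsWithin 0 {x | x ≠ 0}, ∀ i, ‖x i‖ ≤ 1 :=
    eventually_nhdsWithin_of_eventually_nhds <| by
      filter_upwards [Metric.ball_mem_nhds (0 : Fin n → ℂ) one_pos] with x hx i
      exact (norm_le_pi_norm x i).trans (mem_ball_zero_iff.mp hx).le
  refine squeeze_zero' (g := fun x : Fin n → ℂ => ‖x j‖ ^ v j)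
    (Eventually.of_forall fun x => by positivity) ?_ ?_
  · filter_upwards [hsmall, self_mem_nhdsWithin] with x hx1 hx0
    rw [div_le_iff₀ (hρ x hx0)]
    exact prod_rpow_le_rpow_mul_sum_prod_pow A (fun i => norm_nonneg _) hx1 ha hr hv huv j
  · have hcont : Continuous fun x : Fin n → ℂ => ‖x j‖ ^ v j :=
      (continuous_apply j).norm.rpow_const fun _ => Or.inr hvj.le
    exact (hcont.tendsto' 0 0 (by simp [Real.zero_rpow hvj.ne'])).mono_left nhdsWithin_le_nhds

/-- If `A` is convenient (it contains a point `aᵢ·eᵢ` with `aᵢ > 0` on every coordinate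
axis), then `ρ(x) = Σ_{α ∈ A} Π |xᵢ|^{αᵢ}` is strictly positive for `x ≠ 0`; and if
`u - v ∈ Γ₊(A) = conv(A) + ℝ_{≥0}ⁿ` for some nonzero `v ≥ 0`, then
`(Π |xᵢ|^{uᵢ}) / ρ(x) → 0` as `x → 0`, `x ≠ 0`. -/
theorem monomial_div_rho_tendsto_zero (n : ℕ) (hn : 1 ≤ n)
    (A : Finset (Fin n → ℕ)) (hA : A.Nonempty)
    (hconv : ∀ i : Fin n, ∃ a : ℕ, 0 < a ∧ (Pi.single i a : Fin n → ℕ) ∈ A)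
    (u : Fin n → ℝ) (hu : ∀ i, 0 ≤ u i)
    (v : Fin n → ℝ) (hv0 : v ≠ 0) (hv : ∀ i, 0 ≤ v i)
    (huv : ∃ a ∈ convexHull ℝ ((fun α : Fin n → ℕ => fun i => (α i : ℝ)) '' ↑A),
      ∃ r : Fin n → ℝ, (∀ i, 0 ≤ r i) ∧ u - v = a + r) :
    (∀ x : Fin n → ℂ, x ≠ 0 → 0 < ∑ α ∈ A, ∏ i, ‖x i‖ ^ (α i)) ∧
    Tendsto (fun x : Fin n → ℂ =>
        (∏ i, ‖x i‖ ^ (u i)) / ∑ α ∈ A, ∏ i, ‖x i‖ ^ (α i))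
      (nhdsWithin (0 : Fin n → ℂ) {x | x ≠ 0}) (nhds 0) :=
  monomial_div_rho_tendsto_zero_general n A hconv u v hv0 hv huv
end

section
/- Let q ≥ 2 be an integer, let s, t ∈ ℂ with s ≠ 0, and let f = (x² + y³)² + s·x·y^{q+4} + t·x·y^{q+5} ∈ ℂ[x,y]. Then: (i) there exist polynomials α, β, u ∈ ℂ[x,y] with u(0,0) ≠ 0 such that u·y^{q+7} = α·(∂f/∂x) + β·(∂f/∂y); and (ii) there exist polynomials α', β', u' ∈ ℂ[x,y] with u'(0,0) ≠ 0 such that u'·x^{q+4} = α'·(∂f/∂x) + β'·(∂f/∂y). In particular, y^{q+7} and x^{q+4} belong to the Jacobian ideal of f in the local ring ℂ[x,y] localized at the maximal ideal (x,y). -/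
/-!
Give `x` weight 3 and `y` weight 2, so that `(x² + y³)²` is weighted homogeneous of degree 12
and the deformation terms have higher weight. Write `f_x = 4x³ + 4xy³ + σ y^{q+4}` and
`f_y = 6x²y² + 6y⁵ + τ x y^{q+3}`, where `σ(0) = s` and `τ(0) = (q + 4) s` are units. Explicit
combinations of `f_x, f_y` give `y^{q+7}` and then `x y^{q+6}` up to units, while
`3y² f_x - 2x f_y` and `τx f_x - σy f_y` trade `x²` for `y³` modulo the Jacobian ideal. By
induction on the exponent of `x`, every monomial `x^a y^b` with `3a + 2b ≥ 2q + 14` lies in the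
Jacobian ideal of the local ring; for `x^{q+4}` this weight bound is `q ≥ 2`.
-/

open MvPolynomial

/-- The polynomial `f = (x² + y³)² + s x y^{q+4} + t x y^{q+5}` (family `W^#_{1,2q-1}`),
with `x = X 0`, `y = X 1`. -/
noncomputable def fWsharpOdd (q : ℕ) (s t : ℂ) : MvPolynomial (Fin 2) ℂ :=
  (X 0 ^ 2 + X 1 ^ 3) ^ 2 + C s * X 0 * X 1 ^ (q + 4) + C t * X 0 * X 1 ^ (q + 5)

namespace MvPolynomial

variable {σ R : Type*} [CommRing R] [IsDomain R]

instance isPrime_ker_constantCoeff :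
    (RingHom.ker (constantCoeff : MvPolynomial σ R →+* R)).IsPrime :=
  RingHom.ker_isPrime _

noncomputable def jacobianIdeal [Fintype σ] (f : MvPolynomial σ R) : Ideal (MvPolynomial σ R) :=
  Ideal.span (Set.range fun i => pderiv i f)

/-- The contraction to `R[σ]` of the Jacobian ideal of `f` in the local ring at the origin. -/
noncomputable def localJacobianIdeal [Fintype σ] (f : MvPolynomial σ R) :
    Ideal (MvPolynomial σ R) :=
  ((jacobianIdeal f).map
    (algebraMap _ (Localization.AtPrime (RingHom.ker (constantCoeff : MvPolynomial σ R →+* R))))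
    ).comap (algebraMap _ _)

variable [Fintype σ] {f p u : MvPolynomial σ R}

theorem pderiv_mem_localJacobianIdeal (i : σ) : pderiv i f ∈ localJacobianIdeal f :=
  Ideal.le_comap_map (Ideal.subset_span ⟨i, rfl⟩)

theorem mul_pderiv_add_mul_pderiv_mem_localJacobianIdeal (i j : σ) (c d : MvPolynomial σ R) :
    c * pderiv i f + d * pderiv j f ∈ localJacobianIdeal f :=
  add_mem (Ideal.mul_mem_left _ _ (pderiv_mem_localJacobianIdeal i))
    (Ideal.mul_mem_left _ _ (pderiv_mem_localJacobianIdeal j))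

theorem mul_mem_localJacobianIdeal_iff (hu : constantCoeff u ≠ 0) :
    u * p ∈ localJacobianIdeal f ↔ p ∈ localJacobianIdeal f := by
  rw [localJacobianIdeal, Ideal.mem_comap, Ideal.mem_comap, map_mul]
  exact Ideal.unit_mul_mem_iff_mem _
    (IsLocalization.map_units _ (⟨u, hu⟩ : (RingHom.ker constantCoeff).primeCompl))

theorem mem_localJacobianIdeal_iff :
    p ∈ localJacobianIdeal f ↔
      ∃ u, constantCoeff u ≠ 0 ∧ ∃ c : σ → MvPolynomial σ R, u * p = ∑ i, c i * pderiv i f := by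
  rw [localJacobianIdeal, Ideal.mem_comap,
    IsLocalization.algebraMap_mem_map_algebraMap_iff (RingHom.ker constantCoeff).primeCompl]
  simp only [jacobianIdeal, Ideal.mem_span_range_iff_exists_fun, eq_comm]
  rfl

end MvPolynomial

namespace WsharpOdd

variable (q : ℕ) (s t : ℂ)

noncomputable def sigma : MvPolynomial (Fin 2) ℂ := C s + C t * X 1

noncomputable def tau : MvPolynomial (Fin 2) ℂ :=
  C ((q + 4 : ℂ) * s) + C ((q + 5 : ℂ) * t) * X 1

theorem pderiv_zero_fWsharpOdd :
    pderiv 0 (fWsharpOdd q s t) =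
      4 * X 0 ^ 3 + 4 * X 0 * X 1 ^ 3 + sigma s t * X 1 ^ (q + 4) := by
  simp only [fWsharpOdd, sigma, map_add, pderiv_mul, pderiv_pow, pderiv_X_self,
    pderiv_X_of_ne (show (1 : Fin 2) ≠ 0 by decide), pderiv_C]
  ring

theorem pderiv_one_fWsharpOdd :
    pderiv 1 (fWsharpOdd q s t) =
      6 * X 0 ^ 2 * X 1 ^ 2 + 6 * X 1 ^ 5 + tau q s t * X 0 * X 1 ^ (q + 3) := by
  simp only [fWsharpOdd, tau, map_add, map_mul, pderiv_mul, pderiv_pow, pderiv_X_self,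
    pderiv_X_of_ne (show (0 : Fin 2) ≠ 1 by decide), pderiv_C, map_natCast, map_ofNat]
  push_cast
  ring

theorem constantCoeff_sigma : constantCoeff (sigma s t) = s := by simp [sigma]

theorem constantCoeff_tau : constantCoeff (tau q s t) = (q + 4) * s := by simp [tau]

variable {q s t}

theorem constantCoeff_three_sigma_add_two_tau :
    constantCoeff (3 * sigma s t + 2 * tau q s t) = (2 * q + 11) * s := by
  rw [map_add, map_mul, map_mul, constantCoeff_sigma, constantCoeff_tau, map_ofNat, map_ofNat]
  ring

theorem constantCoeff_tau_ne_zero (hs : s ≠ 0) : constantCoeff (tau q s t) ≠ 0 := by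
  rw [constantCoeff_tau]
  exact mul_ne_zero (by exact_mod_cast (by omega : q + 4 ≠ 0)) hs

theorem constantCoeff_three_sigma_add_two_tau_ne_zero (hs : s ≠ 0) :
    constantCoeff (3 * sigma s t + 2 * tau q s t) ≠ 0 := by
  rw [constantCoeff_three_sigma_add_two_tau]
  exact mul_ne_zero (by exact_mod_cast (by omega : 2 * q + 11 ≠ 0)) hs

local notation "J" => localJacobianIdeal (fWsharpOdd q s t)

theorem y_pow_mem_localJacobianIdeal (hq : 2 ≤ q) (hs : s ≠ 0) : X 1 ^ (q + 7) ∈ J := by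
  obtain ⟨n, rfl⟩ := Nat.exists_eq_add_of_le' hq
  set u := 3 * (3 * sigma s t + 2 * tau (n + 2) s t) + tau (n + 2) s t ^ 2 * X 0 * X 1 ^ n
  have hu : constantCoeff u ≠ 0 := by
    have hX : constantCoeff (tau (n + 2) s t ^ 2 * X 0 * X 1 ^ n) = 0 := by simp
    rw [map_add, hX, add_zero, map_mul, map_ofNat]
    exact mul_ne_zero three_ne_zero (constantCoeff_three_sigma_add_two_tau_ne_zero hs)
  have key : u * X 1 ^ (n + 2 + 7) = 9 * X 1 ^ 3 * pderiv 0 (fWsharpOdd (n + 2) s t) +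
      (tau (n + 2) s t * X 1 ^ (n + 4) - 6 * X 0 * X 1) * pderiv 1 (fWsharpOdd (n + 2) s t) := by
    rw [pderiv_zero_fWsharpOdd, pderiv_one_fWsharpOdd]
    ring
  rw [← mul_mem_localJacobianIdeal_iff hu, key]
  exact mul_pderiv_add_mul_pderiv_mem_localJacobianIdeal 0 1 _ _

theorem x_mul_y_pow_mem_localJacobianIdeal (hq : 2 ≤ q) (hs : s ≠ 0) :
    X 0 * X 1 ^ (q + 6) ∈ J := by
  have hu : constantCoeff (2 * (3 * sigma s t + 2 * tau q s t)) ≠ 0 := by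
    rw [map_mul, map_ofNat]
    exact mul_ne_zero two_ne_zero (constantCoeff_three_sigma_add_two_tau_ne_zero hs)
  have key : 2 * (3 * sigma s t + 2 * tau q s t) * (X 0 * X 1 ^ (q + 6)) =
      (6 * X 0 * X 1 ^ 2 + tau q s t * X 1 ^ (q + 3)) * pderiv 0 (fWsharpOdd q s t) +
        -4 * X 0 ^ 2 * pderiv 1 (fWsharpOdd q s t) +
        -(tau q s t * sigma s t * X 1 ^ q) * X 1 ^ (q + 7) := by
    rw [pderiv_zero_fWsharpOdd, pderiv_one_fWsharpOdd]
    ring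
  rw [← mul_mem_localJacobianIdeal_iff hu, key]
  exact add_mem (mul_pderiv_add_mul_pderiv_mem_localJacobianIdeal 0 1 _ _)
    (Ideal.mul_mem_left _ _ (y_pow_mem_localJacobianIdeal hq hs))

theorem x_pow_add_two_mem_localJacobianIdeal (hs : s ≠ 0) {a b : ℕ}
    (h : X 0 ^ a * X 1 ^ (b + q + 6) ∈ J) : X 0 ^ (a + 2) * X 1 ^ (b + q + 3) ∈ J := by
  have hu : constantCoeff (2 * tau q s t) ≠ 0 := by
    rw [map_mul, map_ofNat]
    exact mul_ne_zero two_ne_zero (constantCoeff_tau_ne_zero hs)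
  have key : 2 * tau q s t * (X 0 ^ (a + 2) * X 1 ^ (b + q + 3)) =
      -(3 * X 0 ^ a * X 1 ^ (b + 2)) * pderiv 0 (fWsharpOdd q s t) +
        2 * X 0 ^ (a + 1) * X 1 ^ b * pderiv 1 (fWsharpOdd q s t) +
        3 * sigma s t * (X 0 ^ a * X 1 ^ (b + q + 6)) := by
    rw [pderiv_zero_fWsharpOdd, pderiv_one_fWsharpOdd]
    ring
  rw [← mul_mem_localJacobianIdeal_iff hu, key]
  exact add_mem (mul_pderiv_add_mul_pderiv_mem_localJacobianIdeal 0 1 _ _)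
    (Ideal.mul_mem_left _ _ h)

theorem x_pow_add_four_mem_localJacobianIdeal (hs : s ≠ 0) {a b : ℕ}
    (h₀ : X 0 ^ a * X 1 ^ (b + 6) ∈ J) (h₂ : X 0 ^ (a + 2) * X 1 ^ (b + 3) ∈ J) :
    X 0 ^ (a + 4) * X 1 ^ b ∈ J := by
  have hu : constantCoeff (4 * tau q s t) ≠ 0 := by
    rw [map_mul, map_ofNat]
    exact mul_ne_zero (by norm_num) (constantCoeff_tau_ne_zero hs)
  have key : 4 * tau q s t * (X 0 ^ (a + 4) * X 1 ^ b) =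
      tau q s t * X 0 ^ (a + 1) * X 1 ^ b * pderiv 0 (fWsharpOdd q s t) +
        -(sigma s t * X 0 ^ a * X 1 ^ (b + 1)) * pderiv 1 (fWsharpOdd q s t) +
        (6 * sigma s t - 4 * tau q s t) * (X 0 ^ (a + 2) * X 1 ^ (b + 3)) +
        6 * sigma s t * (X 0 ^ a * X 1 ^ (b + 6)) := by
    rw [pderiv_zero_fWsharpOdd, pderiv_one_fWsharpOdd]
    ring
  rw [← mul_mem_localJacobianIdeal_iff hu, key]
  exact add_mem (add_mem (mul_pderiv_add_mul_pderiv_mem_localJacobianIdeal 0 1 _ _)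
    (Ideal.mul_mem_left _ _ h₂)) (Ideal.mul_mem_left _ _ h₀)

theorem x_pow_mul_y_pow_mem_localJacobianIdeal (hq : 2 ≤ q) (hs : s ≠ 0) :
    ∀ a b : ℕ, 2 * q + 14 ≤ 3 * a + 2 * b → X 0 ^ a * X 1 ^ b ∈ J
  | 0, b, h => by
    obtain ⟨r, rfl⟩ : ∃ r, b = q + 7 + r := ⟨b - (q + 7), by omega⟩
    rw [pow_zero, one_mul, pow_add]
    exact Ideal.mul_mem_right _ _ (y_pow_mem_localJacobianIdeal hq hs)
  | 1, b, h => by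
    obtain ⟨r, rfl⟩ : ∃ r, b = q + 6 + r := ⟨b - (q + 6), by omega⟩
    rw [pow_one, pow_add, ← mul_assoc]
    exact Ideal.mul_mem_right _ _ (x_mul_y_pow_mem_localJacobianIdeal hq hs)
  | 2, b, h => by
    obtain ⟨r, rfl⟩ : ∃ r, b = r + q + 3 := ⟨b - (q + 3), by omega⟩
    exact x_pow_add_two_mem_localJacobianIdeal hs
      (x_pow_mul_y_pow_mem_localJacobianIdeal hq hs 0 _ (by omega))
  | 3, b, h => by
    obtain ⟨r, rfl⟩ : ∃ r, b = r + q + 3 := ⟨b - (q + 3), by omega⟩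
    exact x_pow_add_two_mem_localJacobianIdeal hs
      (x_pow_mul_y_pow_mem_localJacobianIdeal hq hs 1 _ (by omega))
  | a + 4, b, h =>
    x_pow_add_four_mem_localJacobianIdeal hs
      (x_pow_mul_y_pow_mem_localJacobianIdeal hq hs a _ (by omega))
      (x_pow_mul_y_pow_mem_localJacobianIdeal hq hs (a + 2) _ (by omega))

end WsharpOdd

/-- For `f = (x² + y³)² + s x y^{q+4} + t x y^{q+5}` with `q ≥ 2` and `s ≠ 0`, there are
units `u, u'` (polynomials with nonzero constant term) and polynomials `α, β, α', β'`
with `u·y^{q+7} = α·f_x + β·f_y` and `u'·x^{q+4} = α'·f_x + β'·f_y`; in particular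
`y^{q+7}` and `x^{q+4}` lie in the Jacobian ideal of `f` in the local ring at `0`. -/
theorem y_and_x_powers_in_jacobian_WsharpOdd (q : ℕ) (hq : 2 ≤ q) (s t : ℂ)
    (hs : s ≠ 0) :
    (∃ α β u : MvPolynomial (Fin 2) ℂ, MvPolynomial.coeff 0 u ≠ 0 ∧
      u * X 1 ^ (q + 7) =
        α * pderiv 0 (fWsharpOdd q s t) + β * pderiv 1 (fWsharpOdd q s t)) ∧
    (∃ α' β' u' : MvPolynomial (Fin 2) ℂ, MvPolynomial.coeff 0 u' ≠ 0 ∧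
      u' * X 0 ^ (q + 4) =
        α' * pderiv 0 (fWsharpOdd q s t) + β' * pderiv 1 (fWsharpOdd q s t)) := by
  have certificate {p : MvPolynomial (Fin 2) ℂ} (hp : p ∈ localJacobianIdeal (fWsharpOdd q s t)) :
      ∃ α β u : MvPolynomial (Fin 2) ℂ, coeff 0 u ≠ 0 ∧
        u * p = α * pderiv 0 (fWsharpOdd q s t) + β * pderiv 1 (fWsharpOdd q s t) := by
    obtain ⟨u, hu, c, hc⟩ := mem_localJacobianIdeal_iff.mp hp
    exact ⟨c 0, c 1, u, hu, by rw [hc, Fin.sum_univ_two]⟩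
  refine ⟨certificate (WsharpOdd.y_pow_mem_localJacobianIdeal hq hs), certificate ?_⟩
  simpa using WsharpOdd.x_pow_mul_y_pow_mem_localJacobianIdeal hq hs (q + 4) 0 (by omega)
end

section
/- Let q ≥ 2 be an integer, let s, t ∈ ℂ with s ≠ 0, and let f = (x² + y³)² + s·x·y^{q+4} + t·x·y^{q+5} ∈ ℂ[x,y]. Then: (i) there exist polynomials α, β, u ∈ ℂ[x,y] with u(0,0) ≠ 0 such that u·x³·y^{q+4} = α·(∂f/∂x) + β·(∂f/∂y); and (ii) there exist polynomials α', β', u' ∈ ℂ[x,y] with u'(0,0) ≠ 0 such that u'·x·y^{q+6} = α'·(∂f/∂x) + β'·(∂f/∂y). In particular, x³y^{q+4} and x·y^{q+6} belong to the Jacobian ideal of f in the local ring ℂ[x,y] localized at the maximal ideal (x,y). -/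
/-!
With `g = x² + y³`, `P = s + t y` and `Q = (q+4) s + (q+5) t y` one has
`f_x = 4 x g + y^{q+4} P` and `f_y = 6 y² g + x y^{q+3} Q`. Eliminating `g` between these
(with `y^{q-2}` replaced by an arbitrary `b`, the explicit cofactors work over any commutative
ring) puts `U · x y^{q+6}` into the Jacobian ideal, where
`R = 3P + 2Q` and `U = 6R² - P Q³ y^{2q-1}`; moreover `12 R · x³ y^{q+4}` is congruent to a
multiple of `x y^{q+6}`. Both `U` and `12 R U` are units at the origin since `R(0) = (2q + 11) s`.
-/

open MvPolynomial

section Certificates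

variable {A : Type*} [CommRing A] {I : Ideal A} {x y b P Q : A}

theorem mul_x_mul_y_pow_eight_mem (hFx : 4 * x * (x ^ 2 + y ^ 3) + y ^ 6 * b * P ∈ I)
    (hFy : 6 * y ^ 2 * (x ^ 2 + y ^ 3) + x * y ^ 5 * b * Q ∈ I) :
    (6 * (3 * P + 2 * Q) ^ 2 - P * Q ^ 3 * y ^ 3 * b ^ 2) * (x * (y ^ 8 * b)) ∈ I := by
  have := I.add_mem
    (I.mul_mem_left
      ((3 * P + 2 * Q) * (18 * x * y ^ 2 + 3 * y ^ 5 * b * Q) - 9 * P * Q * y ^ 5 * b) hFx)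
    (I.mul_mem_left (-12 * (3 * P + 2 * Q) * x ^ 2 + 6 * P * Q * x * y ^ 3 * b
      - P * Q ^ 2 * y ^ 6 * b ^ 2) hFy)
  convert this using 1
  ring

theorem mul_x_pow_three_mul_y_pow_six_add_mem
    (hFx : 4 * x * (x ^ 2 + y ^ 3) + y ^ 6 * b * P ∈ I)
    (hFy : 6 * y ^ 2 * (x ^ 2 + y ^ 3) + x * y ^ 5 * b * Q ∈ I) :
    12 * (3 * P + 2 * Q) * (x ^ 3 * (y ^ 6 * b))
      + (12 * (3 * P + 2 * Q) * y - P * Q ^ 2 * y ^ 4 * b ^ 2) * (x * (y ^ 8 * b)) ∈ I := by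
  have := I.add_mem (I.mul_mem_left (6 * Q * y ^ 6 * b) hFx)
    (I.mul_mem_left (P * (6 * x * y ^ 4 * b - Q * y ^ 7 * b ^ 2)) hFy)
  convert this using 1
  ring

theorem mul_x_pow_three_mul_y_pow_six_mem
    (hFx : 4 * x * (x ^ 2 + y ^ 3) + y ^ 6 * b * P ∈ I)
    (hFy : 6 * y ^ 2 * (x ^ 2 + y ^ 3) + x * y ^ 5 * b * Q ∈ I) :
    12 * (3 * P + 2 * Q) * (6 * (3 * P + 2 * Q) ^ 2 - P * Q ^ 3 * y ^ 3 * b ^ 2)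
      * (x ^ 3 * (y ^ 6 * b)) ∈ I := by
  have := I.sub_mem
    (I.mul_mem_left (6 * (3 * P + 2 * Q) ^ 2 - P * Q ^ 3 * y ^ 3 * b ^ 2)
      (mul_x_pow_three_mul_y_pow_six_add_mem hFx hFy))
    (I.mul_mem_left (12 * (3 * P + 2 * Q) * y - P * Q ^ 2 * y ^ 4 * b ^ 2)
      (mul_x_mul_y_pow_eight_mem hFx hFy))
  convert this using 1
  ring

end Certificates

theorem pderiv_zero_fWsharpOdd (q : ℕ) (s t : ℂ) :
    pderiv 0 (fWsharpOdd q s t) =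
      4 * X 0 * (X 0 ^ 2 + X 1 ^ 3) + X 1 ^ (q + 4) * (C s + C t * X 1) := by
  simp only [fWsharpOdd, map_add, pderiv_mul, pderiv_pow, pderiv_X_self, pderiv_C,
    pderiv_X_of_ne (show (1 : Fin 2) ≠ 0 by decide)]
  ring

theorem pderiv_one_fWsharpOdd (q : ℕ) (s t : ℂ) :
    pderiv 1 (fWsharpOdd q s t) = 6 * X 1 ^ 2 * (X 0 ^ 2 + X 1 ^ 3)
      + X 0 * X 1 ^ (q + 3) * (C ((q + 4) * s) + C ((q + 5) * t) * X 1) := by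
  simp only [fWsharpOdd, map_add, pderiv_mul, pderiv_pow, pderiv_X_self, pderiv_C,
    pderiv_X_of_ne (show (0 : Fin 2) ≠ 1 by decide), map_mul, map_natCast, map_ofNat]
  push_cast
  ring

/-- For `f = (x² + y³)² + s x y^{q+4} + t x y^{q+5}` with `q ≥ 2` and `s ≠ 0`, there are
units `u, u'` (polynomials with nonzero constant term) and polynomials `α, β, α', β'`
with `u·x³y^{q+4} = α·f_x + β·f_y` and `u'·x y^{q+6} = α'·f_x + β'·f_y`; in particular
`x³y^{q+4}` and `x y^{q+6}` lie in the Jacobian ideal of `f` in the local ring at `0`. -/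
theorem mixed_powers_in_jacobian_WsharpOdd (q : ℕ) (hq : 2 ≤ q) (s t : ℂ)
    (hs : s ≠ 0) :
    (∃ α β u : MvPolynomial (Fin 2) ℂ, MvPolynomial.coeff 0 u ≠ 0 ∧
      u * (X 0 ^ 3 * X 1 ^ (q + 4)) =
        α * pderiv 0 (fWsharpOdd q s t) + β * pderiv 1 (fWsharpOdd q s t)) ∧
    (∃ α' β' u' : MvPolynomial (Fin 2) ℂ, MvPolynomial.coeff 0 u' ≠ 0 ∧
      u' * (X 0 * X 1 ^ (q + 6)) =
        α' * pderiv 0 (fWsharpOdd q s t) + β' * pderiv 1 (fWsharpOdd q s t)) := by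
  obtain ⟨k, rfl⟩ := Nat.exists_eq_add_of_le' hq
  set I := Ideal.span {pderiv 0 (fWsharpOdd (k + 2) s t), pderiv 1 (fWsharpOdd (k + 2) s t)}
  set P : MvPolynomial (Fin 2) ℂ := C s + C t * X 1
  set Q : MvPolynomial (Fin 2) ℂ := C ((↑(k + 2) + 4) * s) + C ((↑(k + 2) + 5) * t) * X 1
  have hFx : 4 * X 0 * (X 0 ^ 2 + X 1 ^ 3) + X 1 ^ 6 * X 1 ^ k * P ∈ I := by
    have h : pderiv 0 (fWsharpOdd (k + 2) s t) ∈ I := Ideal.subset_span (by simp)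
    rw [pderiv_zero_fWsharpOdd] at h
    convert h using 1
    ring
  have hFy : 6 * X 1 ^ 2 * (X 0 ^ 2 + X 1 ^ 3) + X 0 * X 1 ^ 5 * X 1 ^ k * Q ∈ I := by
    have h : pderiv 1 (fWsharpOdd (k + 2) s t) ∈ I := Ideal.subset_span (by simp)
    rw [pderiv_one_fWsharpOdd] at h
    convert h using 1
    ring
  have hR : constantCoeff (3 * P + 2 * Q) ≠ 0 := by
    have : constantCoeff (3 * P + 2 * Q) = (2 * k + 15) * s := by
      simp only [P, Q, map_add, map_mul, map_ofNat, constantCoeff_C, constantCoeff_X]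
      push_cast
      ring
    rw [this]
    exact mul_ne_zero (by norm_cast) hs
  constructor
  · rw [show (X 1 : MvPolynomial (Fin 2) ℂ) ^ (k + 2 + 4) = X 1 ^ 6 * X 1 ^ k by ring]
    obtain ⟨α, β, h⟩ := Ideal.mem_span_pair.1 (mul_x_pow_three_mul_y_pow_six_mem hFx hFy)
    refine ⟨α, β, _, ?_, h.symm⟩
    rw [← constantCoeff_eq]
    simpa [map_ofNat] using hR
  · rw [show (X 1 : MvPolynomial (Fin 2) ℂ) ^ (k + 2 + 6) = X 1 ^ 8 * X 1 ^ k by ring]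
    obtain ⟨α, β, h⟩ := Ideal.mem_span_pair.1 (mul_x_mul_y_pow_eight_mem hFx hFy)
    refine ⟨α, β, _, ?_, h.symm⟩
    rw [← constantCoeff_eq]
    simpa [map_ofNat] using hR
end
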